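/- arXiv:2112.10140 — 3 statements merged into one kernel-verified Lean document; each statement's English description precedes it below -/
import Mathlib

section
/- Let K be a commutative ℚ-algebra, α ∈ K, A ∈ M_l(K), and set A_k = ∏_{i=0}^{k-1}(A + iα·I) (with A_0 = I). Let F(X) = Σ_{k≥0} A_k X^k/k! ∈ M_l(K)[[X]]. Then for every n ≥ 0, Σ_{i≥0} A_{n+i} X^i/i! = A_n · (1 - αX)^{-n} · F(X) in M_l(K)[[X]], where (1-αX)^{-n} = Σ_{l≥0} binom(n-1+l, l) α^l X^l. -/
/-!
Write `B = A + nα·I`; peeling off the first `n` factors gives `A_{n+m} = A_n · B_m`, where `B_m`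
is the `α`-rising product of `B`. Because `nα·I` is central, `B_m` expands like a binomial power
(a Vandermonde identity): `B_m = Σ_{i+j=m} binom(m,i) (nα)^{(i)} A_j` with
`(nα)^{(i)} = ∏_{k<i} (nα + kα) = n(n+1)⋯(n+i-1) α^i`. After dividing by `m!` this is a Cauchy
product of exponential generating series, and `n(n+1)⋯(n+i-1)/i! = binom(n+i-1,i)` is exactly the
`i`-th coefficient of `(1-αX)^{-n}`.
-/

open PowerSeries

variable {K : Type*} [CommRing K] [Algebra ℚ K] {l : ℕ}

/-- `ascProd A α n = ∏_{i=0}^{n-1} (A + i·α·I)`, with `ascProd A α 0 = I`. -/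
def ascProd (A : Matrix (Fin l) (Fin l) K) (α : K) : ℕ → Matrix (Fin l) (Fin l) K
  | 0 => 1
  | n + 1 => ascProd A α n * (A + ((n : K) * α) • (1 : Matrix (Fin l) (Fin l) K))

/-- The formal series `(1-αX)^{-n} = Σ_{m≥0} binom(n-1+m, m) α^m X^m`
(as a series of scalar matrices). -/
noncomputable def negPow (α : K) (n : ℕ) : PowerSeries (Matrix (Fin l) (Fin l) K) :=
  PowerSeries.mk fun m =>
    ((((n + m - 1).choose m : K)) * α ^ m) • (1 : Matrix (Fin l) (Fin l) K)


open Finset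
open scoped Nat

section Ring

variable {R : Type*} [CommRing R]

theorem ascProd_succ (A : Matrix (Fin l) (Fin l) R) (α : R) (m : ℕ) :
    ascProd A α (m + 1) = ascProd A α m * (A + ((m : R) * α) • 1) :=
  rfl

theorem ascProd_mul_add_smul_one (A : Matrix (Fin l) (Fin l) R) (α e : R) (m : ℕ) :
    ascProd A α m * (A + ((m : R) * α + e) • 1) = ascProd A α (m + 1) + e • ascProd A α m := by
  rw [add_smul, ← add_assoc, mul_add, ascProd_succ, mul_smul_comm, mul_one]

theorem ascProd_add (A : Matrix (Fin l) (Fin l) R) (α : R) (n m : ℕ) :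
    ascProd A α (n + m) = ascProd A α n * ascProd (A + ((n : R) * α) • 1) α m := by
  induction m with
  | zero => simp [ascProd]
  | succ m ih =>
    rw [← add_assoc, ascProd_succ, ih, ascProd_succ, mul_assoc, add_assoc, ← add_smul]
    push_cast
    ring_nf

theorem ascProd_add_smul_one (A : Matrix (Fin l) (Fin l) R) (α c : R) (m : ℕ) :
    ascProd (A + c • 1) α m = ∑ ij ∈ antidiagonal m,
      m.choose ij.1 • (∏ k ∈ range ij.1, (c + k * α)) • ascProd A α ij.2 := by
  induction m with
  | zero => simp [ascProd]
  | succ m ih =>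
    rw [sum_antidiagonal_choose_succ_nsmul
      (fun i j => (∏ k ∈ range i, (c + k * α)) • ascProd A α j), ← sum_add_distrib,
      ascProd_succ, ih, sum_mul]
    refine sum_congr rfl fun ij hij => ?_
    rw [HasAntidiagonal.mem_antidiagonal] at hij
    have split_shift :
        A + c • 1 + ((m : R) * α) • 1 = A + ((ij.2 : R) * α + (c + ij.1 * α)) • 1 := by
      rw [← hij, add_assoc, ← add_smul]
      push_cast
      ring_nf
    rw [← Nat.choose_symm_of_eq_add hij.symm, smul_mul_assoc, smul_mul_assoc, split_shift,
      ascProd_mul_add_smul_one, prod_range_succ, smul_add, smul_add, smul_smul, mul_comm]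

theorem prod_range_natCast_mul_add_mul (α : R) (n i : ℕ) :
    ∏ k ∈ range i, ((n : R) * α + k * α) = (n.ascFactorial i : R) * α ^ i := by
  induction i with
  | zero => simp
  | succ i ih =>
    rw [prod_range_succ, ih, Nat.ascFactorial_succ]
    push_cast
    ring

end Ring

theorem inv_factorial_mul_choose_of_add_eq {i j m : ℕ} (h : i + j = m) :
    (m ! : ℚ)⁻¹ * m.choose i = (i ! : ℚ)⁻¹ * (j ! : ℚ)⁻¹ := by
  subst h
  rw [Nat.cast_add_choose]
  field_simp

section Algebra

variable {R : Type*} [CommRing R] [Algebra ℚ R]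

theorem mk_ascProd_add_smul_one (A : Matrix (Fin l) (Fin l) R) (α c : R) :
    (mk fun m => (m ! : ℚ)⁻¹ • ascProd (A + c • 1) α m) =
      (mk fun i => ((i ! : ℚ)⁻¹ • ∏ k ∈ range i, (c + k * α)) • (1 : Matrix (Fin l) (Fin l) R)) *
        mk fun j => (j ! : ℚ)⁻¹ • ascProd A α j := by
  ext m : 1
  rw [coeff_mk, coeff_mul, ascProd_add_smul_one, smul_sum]
  refine sum_congr rfl fun ij hij => ?_
  rw [HasAntidiagonal.mem_antidiagonal] at hij
  simp only [coeff_mk]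
  rw [← Nat.cast_smul_eq_nsmul ℚ, smul_smul, inv_factorial_mul_choose_of_add_eq hij,
    smul_mul_assoc, one_mul, smul_assoc, smul_comm _ ((ij.2 ! : ℚ)⁻¹), mul_smul]

theorem mk_prod_range_natCast_mul_add_mul_eq_negPow (α : R) (n : ℕ) :
    (mk fun i => ((i ! : ℚ)⁻¹ • ∏ k ∈ range i, ((n : R) * α + k * α)) •
      (1 : Matrix (Fin l) (Fin l) R)) = negPow α n := by
  ext i : 1
  simp only [negPow, coeff_mk]
  congr 1
  rw [prod_range_natCast_mul_add_mul, Nat.ascFactorial_eq_factorial_mul_choose', Nat.cast_mul,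
    mul_assoc, Algebra.smul_def, ← mul_assoc, ← map_natCast (algebraMap ℚ R), ← map_mul,
    inv_mul_cancel₀ (by positivity), map_one, one_mul]

end Algebra

/-- for every `n ≥ 0`,
`Σ_{i≥0} A_{n+i} X^i/i! = A_n · (1-αX)^{-n} · F(X)` where
`F(X) = Σ_{k≥0} A_k X^k/k!` and `A_k = ∏_{i=0}^{k-1}(A + iα·I)`. -/
theorem statement1 (α : K) (A : Matrix (Fin l) (Fin l) K) (n : ℕ) :
    (PowerSeries.mk fun i => ((Nat.factorial i : ℚ)⁻¹) • ascProd A α (n + i))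
      = PowerSeries.C (ascProd A α n) * negPow α n *
        (PowerSeries.mk fun k => ((Nat.factorial k : ℚ)⁻¹) • ascProd A α k) := by
  have shift : (mk fun i => (i ! : ℚ)⁻¹ • ascProd A α (n + i)) =
      C (ascProd A α n) * mk fun i => (i ! : ℚ)⁻¹ • ascProd (A + ((n : K) * α) • 1) α i := by
    ext i : 1
    rw [coeff_C_mul, coeff_mk, coeff_mk, ascProd_add, mul_smul_comm]
  rw [shift, mk_ascProd_add_smul_one, mk_prod_range_natCast_mul_add_mul_eq_negPow, mul_assoc]
end

section
/- Let K be a commutative ℚ-algebra, α ∈ K, A ∈ M_l(K), and let G(X) = Σ_{k≥0} ∏_{i=0}^{k-1}(A + iα·I) X^k/k! ∈ M_l(K[[X]]) (the formal series (1-αX)^{-A/α}). Then in the two-variable power series ring M_l(K[[X₁,X₂]]) one has G(X₁) · G((X₂ - X₁)·(1 - αX₁)^{-1}) = G(X₂), where (X₂-X₁)(1-αX₁)^{-1} is substituted into G (this substitution is well defined since the series has zero constant term). -/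
open Finset

variable {K : Type*} [CommRing K] [Algebra ℚ K] {l : ℕ}

/-- Build a two-variable matrix power series from its coefficients. -/
def mvMk (f : (Fin 2 →₀ ℕ) → Matrix (Fin l) (Fin l) K) :
    MvPowerSeries (Fin 2) (Matrix (Fin l) (Fin l) K) := f

/-- Substitution of a series `Y` with zero constant term into
`G(T) = Σ_{k≥0} (∏_{i=0}^{k-1}(A + iα·I)) T^k/k!`: since `Y` has zero constant
term, `coeff d (Y^k) = 0` for `k` larger than the total degree of `d`, so the
coefficient of `G(Y)` at `d` is the displayed finite sum. -/
noncomputable def Gsubst (A : Matrix (Fin l) (Fin l) K) (α : K)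
    (Y : MvPowerSeries (Fin 2) (Matrix (Fin l) (Fin l) K)) :
    MvPowerSeries (Fin 2) (Matrix (Fin l) (Fin l) K) :=
  mvMk fun d =>
    ∑ k ∈ Finset.range (d 0 + d 1 + 1),
      ((Nat.factorial k : ℚ)⁻¹ • ascProd A α k) * MvPowerSeries.coeff d (Y ^ k)

/-!
Write `G = Σ_k ∏_{i<k}(a + iα) T^k/k!`, the series `(1 - αT)^{-a/α}`; it is characterized by
`(1 - αT) G' = a G` and `G(0) = 1`. All coefficients in sight are polynomials in `A` and `α`, so
it suffices to prove the identity over a commutative ring, and then to specialize along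
`K[X] → M_l(K)`, `X ↦ A`. Over a commutative ring, with `Y = (X₂ - X₁)/(1 - αX₁)`, one has
`(1 - αX₁)(1 - αY) = 1 - αX₂`, and the chain rule gives
`(1 - αX₂) ∂ᵢ(G(X₁) G(Y)) = a G(X₁) G(Y) ∂ᵢX₂` in both variables, which is also the equation
satisfied by `G(X₂)`. Hence the quotient `G(X₁) G(Y) / G(X₂)` has vanishing partial derivatives
and constant term `1`, so it is `1`.
-/

namespace MvPowerSeries

variable {σ R : Type*} [CommRing R]

theorem coeff_pow_eq_zero_of_degree_lt {a : MvPowerSeries σ R} (ha : constantCoeff a = 0)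
    {n : σ →₀ ℕ} {k : ℕ} (h : n.degree < k) : coeff n (a ^ k) = 0 :=
  coeff_of_lt_order ((Nat.cast_lt.mpr h).trans_le (le_order_pow_of_constantCoeff_eq_zero k ha))

theorem coeff_subst_eq_sum_range {a : MvPowerSeries σ R} (ha : constantCoeff a = 0)
    (f : PowerSeries R) {n : σ →₀ ℕ} {N : ℕ} (hN : n.degree < N) :
    coeff n (f.subst a) = ∑ k ∈ Finset.range N, PowerSeries.coeff k f * coeff n (a ^ k) := by
  rw [PowerSeries.coeff_subst (.of_constantCoeff_zero ha)]
  refine finsum_eq_sum_of_support_subset _ fun k hk => ?_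
  by_contra hkN
  simp only [Finset.coe_range, Set.mem_Iio, not_lt] at hkN
  exact hk (by dsimp only; rw [coeff_pow_eq_zero_of_degree_lt ha (hN.trans_le hkN), smul_zero])

theorem coeff_subst_trunc {a : MvPowerSeries σ R} (ha : constantCoeff a = 0)
    (f : PowerSeries R) {n : σ →₀ ℕ} {N : ℕ} (hN : n.degree < N) :
    coeff n ((PowerSeries.trunc N f : PowerSeries R).subst a) = coeff n (f.subst a) := by
  rw [coeff_subst_eq_sum_range ha _ hN, coeff_subst_eq_sum_range ha _ hN]
  refine Finset.sum_congr rfl fun k hk => ?_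
  rw [PowerSeries.coeff_coe_trunc_of_lt (Finset.mem_range.mp hk)]

theorem constantCoeff_subst_of_constantCoeff_eq_zero {a : MvPowerSeries σ R}
    (ha : constantCoeff a = 0) (f : PowerSeries R) :
    constantCoeff (f.subst a) = PowerSeries.constantCoeff f := by
  rw [← coeff_zero_eq_constantCoeff_apply, coeff_subst_eq_sum_range ha f (N := 1) (by simp)]
  simp

/-- Reduces to the polynomial case `Derivation.comp_aeval_eq`, since each coefficient of
`f.subst a` only sees a truncation of `f`. -/
theorem pderiv_subst {a : MvPowerSeries σ R} (ha : constantCoeff a = 0) (f : PowerSeries R)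
    (i : σ) : pderiv R i (f.subst a) = (PowerSeries.derivative R f).subst a * pderiv R i a := by
  classical
  have hpoly (p : Polynomial R) : pderiv R i ((p : PowerSeries R).subst a) =
      (PowerSeries.derivative R p).subst a * pderiv R i a := by
    rw [PowerSeries.subst_coe (.of_constantCoeff_zero ha), PowerSeries.derivative_coe,
      PowerSeries.subst_coe (.of_constantCoeff_zero ha), Derivation.comp_aeval_eq, smul_eq_mul]
  ext n
  set N := n.degree + 2
  have hn : (n + Finsupp.single i 1).degree < N := by simp [N]
  rw [coeff_pderiv, ← coeff_subst_trunc ha f hn, ← coeff_pderiv, hpoly, coeff_mul, coeff_mul]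
  refine Finset.sum_congr rfl fun x hx => ?_
  have hx : x.1.degree < N - 1 := by
    have := congrArg Finsupp.degree (Finset.HasAntidiagonal.mem_antidiagonal.mp hx)
    simp only [map_add] at this
    omega
  rw [PowerSeries.derivative_coe, ← PowerSeries.trunc_derivative', coeff_subst_trunc ha _ hx]

/-- The hypothesis `hD` says that all partial derivatives of `F / H` vanish. -/
theorem eq_of_pderiv_mul_eq [IsAddTorsionFree R] {F H : MvPowerSeries σ R} (hH : IsUnit H)
    (hD : ∀ i, pderiv R i F * H = F * pderiv R i H)
    (hc : constantCoeff F = constantCoeff H) : F = H := by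
  obtain ⟨u, rfl⟩ := hH
  suffices F * ↑u⁻¹ = 1 by rw [← mul_one F, ← u.inv_mul, ← mul_assoc, this, one_mul]
  refine pderiv.ext (fun i => ?_) ?_
  · rw [Derivation.leibniz, pderiv_inv, pderiv_one, smul_eq_mul, smul_eq_mul]
    linear_combination (↑u⁻¹ : MvPowerSeries σ R) ^ 2 * hD i - ↑u⁻¹ * pderiv R i F * u.mul_inv
  · rw [map_mul, hc, ← map_mul, u.mul_inv, map_one]

end MvPowerSeries

namespace PowerSeries

variable {R : Type*} [CommRing R] [Algebra ℚ R]

noncomputable def ascPochhammerSeries (a α : R) : PowerSeries R :=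
  mk fun k => (k.factorial : ℚ)⁻¹ • ∏ i ∈ Finset.range k, (a + i * α)

theorem coeff_succ_ascPochhammerSeries_mul (a α : R) (k : ℕ) :
    coeff (k + 1) (ascPochhammerSeries a α) * (k + 1) =
      coeff k (ascPochhammerSeries a α) * (a + k * α) := by
  have hk : algebraMap ℚ R ((k + 1).factorial : ℚ)⁻¹ * (k + 1) =
      algebraMap ℚ R (k.factorial : ℚ)⁻¹ := by
    rw [← map_natCast (algebraMap ℚ R), ← map_one (algebraMap ℚ R), ← map_add, ← map_mul,
      Nat.factorial_succ]
    congr 1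
    push_cast
    field_simp
  simp only [ascPochhammerSeries, coeff_mk, Finset.prod_range_succ, Algebra.smul_def]
  linear_combination (∏ i ∈ Finset.range k, (a + i * α)) * (a + k * α) * hk

theorem one_sub_mul_derivative_ascPochhammerSeries (a α : R) :
    (1 - C α * X) * derivative R (ascPochhammerSeries a α) = C a * ascPochhammerSeries a α := by
  ext n
  rw [sub_mul, one_mul, mul_assoc, map_sub, coeff_C_mul, coeff_C_mul, coeff_derivative]
  rcases n with _ | n
  · have h := coeff_succ_ascPochhammerSeries_mul a α 0
    simp only [Nat.cast_zero, zero_add, zero_mul, add_zero, mul_one] at h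
    simp [h, mul_comm]
  · have h := coeff_succ_ascPochhammerSeries_mul a α (n + 1)
    rw [coeff_succ_X_mul, coeff_derivative]
    push_cast at h ⊢
    linear_combination h

theorem constantCoeff_ascPochhammerSeries (a α : R) :
    constantCoeff (ascPochhammerSeries a α) = 1 := by
  simp [ascPochhammerSeries, ← coeff_zero_eq_constantCoeff_apply]

end PowerSeries

open MvPowerSeries
open PowerSeries (ascPochhammerSeries)

section CommRing

variable {σ R : Type*} [CommRing R] [Algebra ℚ R]

theorem constantCoeff_subst_ascPochhammerSeries (a α : R) {Z : MvPowerSeries σ R}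
    (hZ : constantCoeff Z = 0) : constantCoeff ((ascPochhammerSeries a α).subst Z) = 1 := by
  rw [constantCoeff_subst_of_constantCoeff_eq_zero hZ,
    PowerSeries.constantCoeff_ascPochhammerSeries]

theorem one_sub_mul_pderiv_subst_ascPochhammerSeries (a α : R) {Z : MvPowerSeries σ R}
    (hZ : constantCoeff Z = 0) (i : σ) :
    (1 - C α * Z) * pderiv R i ((ascPochhammerSeries a α).subst Z) =
      C a * (ascPochhammerSeries a α).subst Z * pderiv R i Z := by
  have hZ' : PowerSeries.HasSubst Z := .of_constantCoeff_zero hZ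
  have h := congrArg (PowerSeries.substAlgHom hZ')
    (PowerSeries.one_sub_mul_derivative_ascPochhammerSeries a α)
  simp only [map_mul, map_sub, map_one, PowerSeries.coe_substAlgHom, PowerSeries.subst_C,
    PowerSeries.subst_X hZ'] at h
  rw [pderiv_subst hZ, ← mul_assoc, h]

theorem ascPochhammerSeries_subst_X_mul_subst (a α : R) {Y : MvPowerSeries (Fin 2) R}
    (hY : Y * (1 - C α * X 0) = X 1 - X 0) :
    (ascPochhammerSeries a α).subst (X 0 : MvPowerSeries (Fin 2) R) *
        (ascPochhammerSeries a α).subst Y =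
      (ascPochhammerSeries a α).subst (X 1 : MvPowerSeries (Fin 2) R) := by
  have := IsAddTorsionFree.of_module_rat R
  set G := ascPochhammerSeries a α
  have hG {Z : MvPowerSeries (Fin 2) R} (hZ : constantCoeff Z = 0) :
      constantCoeff (G.subst Z) = 1 :=
    constantCoeff_subst_ascPochhammerSeries a α hZ
  have hY0 : constantCoeff Y = 0 := by simpa using congrArg constantCoeff hY
  have hX (j : Fin 2) : constantCoeff (X j : MvPowerSeries (Fin 2) R) = 0 := constantCoeff_X j
  have hW : IsUnit (1 - C α * X 1 : MvPowerSeries (Fin 2) R) :=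
    isUnit_iff_constantCoeff.mpr (by simp)
  have hUV : (1 - C α * X 0) * (1 - C α * Y) = 1 - C α * X 1 := by
    linear_combination (-C α) * hY
  have hDY (i : Fin 2) : pderiv R i Y * (1 - C α * X 0) =
      pderiv R i (X 1) - pderiv R i (X 0) + Y * C α * pderiv R i (X 0) := by
    have h := congrArg (pderiv R i) hY
    simp only [Derivation.leibniz, map_sub, pderiv_one, pderiv_C, smul_eq_mul] at h
    linear_combination h
  have hL (i : Fin 2) : (1 - C α * X 1) * pderiv R i (G.subst (X 0) * G.subst Y) =
      C a * (G.subst (X 0) * G.subst Y) * pderiv R i (X 1) := by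
    rw [← hUV, Derivation.leibniz, smul_eq_mul, smul_eq_mul]
    linear_combination
      (1 - C α * Y) * G.subst Y * one_sub_mul_pderiv_subst_ascPochhammerSeries a α (hX 0) i +
      (1 - C α * X 0) * G.subst (X 0) * one_sub_mul_pderiv_subst_ascPochhammerSeries a α hY0 i +
      C a * G.subst (X 0) * G.subst Y * hDY i
  refine eq_of_pderiv_mul_eq (isUnit_iff_constantCoeff.mpr ?_) (fun i => hW.mul_right_inj.mp ?_) ?_
  · simp [hG (hX 1)]
  · linear_combination G.subst (X 1) * hL i -
      G.subst (X 0) * G.subst Y * one_sub_mul_pderiv_subst_ascPochhammerSeries a α (hX 1) i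
  · rw [map_mul, hG (hX 0), hG hY0, hG (hX 1), mul_one]

end CommRing

section

omit [Algebra ℚ K]

theorem aeval_prod_range_X_add_mul_C (A : Matrix (Fin l) (Fin l) K) (α : K) (k : ℕ) :
    Polynomial.aeval A (∏ i ∈ range k, (Polynomial.X + (i : Polynomial K) * Polynomial.C α)) =
      ascProd A α k := by
  induction k with
  | zero => simp [ascProd]
  | succ k ih =>
    rw [prod_range_succ, map_mul, ih, ascProd, map_add, map_mul, Polynomial.aeval_X,
      map_natCast, Polynomial.aeval_C, Algebra.algebraMap_eq_smul_one, mul_smul,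
      Nat.cast_smul_eq_nsmul, nsmul_eq_mul]

theorem exists_map_aeval_eq_of_mul_one_sub_eq (A : Matrix (Fin l) (Fin l) K) (α : K)
    {Y : MvPowerSeries (Fin 2) (Matrix (Fin l) (Fin l) K)}
    (hY : Y * (1 - C (α • 1) * X 0) = X 1 - X 0) :
    ∃ Y' : MvPowerSeries (Fin 2) (Polynomial K),
      Y' * (1 - C (Polynomial.C α) * X 0) = X 1 - X 0 ∧
        Y = MvPowerSeries.map (Polynomial.aeval A).toRingHom Y' := by
  set U : MvPowerSeries (Fin 2) (Polynomial K) := 1 - C (Polynomial.C α) * X 0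
  have hU : IsUnit U := isUnit_iff_constantCoeff.mpr (by simp [U])
  obtain ⟨V, hV⟩ := hU.exists_left_inv
  have hY' : (X 1 - X 0) * V * U = X 1 - X 0 := by rw [mul_assoc, hV, mul_one]
  refine ⟨_, hY', (hU.map (MvPowerSeries.map (Polynomial.aeval A).toRingHom)).mul_left_inj.mp ?_⟩
  rw [← map_mul, hY']
  simpa [U, Algebra.algebraMap_eq_smul_one] using hY

end

theorem coeff_Gsubst (A : Matrix (Fin l) (Fin l) K) (α : K)
    (Y : MvPowerSeries (Fin 2) (Matrix (Fin l) (Fin l) K)) (d : Fin 2 →₀ ℕ) :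
    coeff d (Gsubst A α Y) = ∑ k ∈ range (d 0 + d 1 + 1),
      ((Nat.factorial k : ℚ)⁻¹ • ascProd A α k) * coeff d (Y ^ k) :=
  rfl

theorem Gsubst_map_aeval (A : Matrix (Fin l) (Fin l) K) (α : K)
    {Z : MvPowerSeries (Fin 2) (Polynomial K)} (hZ : constantCoeff Z = 0) :
    Gsubst A α (MvPowerSeries.map (Polynomial.aeval A).toRingHom Z) =
      MvPowerSeries.map (Polynomial.aeval A).toRingHom
        ((ascPochhammerSeries Polynomial.X (Polynomial.C α)).subst Z) := by
  refine MvPowerSeries.ext fun d => ?_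
  rw [coeff_Gsubst, coeff_map, coeff_subst_eq_sum_range hZ _ (N := d 0 + d 1 + 1)
    (by simp [Finsupp.degree_eq_sum, Fin.sum_univ_two]), map_sum]
  refine sum_congr rfl fun k _ => ?_
  rw [map_mul, ← map_pow, coeff_map, ascPochhammerSeries, PowerSeries.coeff_mk, map_rat_smul,
    ← aeval_prod_range_X_add_mul_C]
  rfl

theorem statement4_general (α : K) (A : Matrix (Fin l) (Fin l) K)
    (Y : MvPowerSeries (Fin 2) (Matrix (Fin l) (Fin l) K))
    (hY : Y * (1 - MvPowerSeries.C (σ := Fin 2) (α • (1 : Matrix (Fin l) (Fin l) K)) *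
            MvPowerSeries.X 0)
          = MvPowerSeries.X 1 - MvPowerSeries.X 0) :
    Gsubst A α (MvPowerSeries.X 0) * Gsubst A α Y = Gsubst A α (MvPowerSeries.X 1) := by
  obtain ⟨Y', hY', rfl⟩ := exists_map_aeval_eq_of_mul_one_sub_eq A α hY
  have hY'0 : constantCoeff Y' = 0 := by simpa using congrArg constantCoeff hY'
  rw [← map_X (Polynomial.aeval (R := K) A).toRingHom 0,
    ← map_X (Polynomial.aeval (R := K) A).toRingHom 1,
    Gsubst_map_aeval A α (constantCoeff_X 0), Gsubst_map_aeval A α hY'0,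
    Gsubst_map_aeval A α (constantCoeff_X 1), ← map_mul,
    ascPochhammerSeries_subst_X_mul_subst _ _ hY']

/-- with `G(T) = Σ_{k≥0} ∏_{i=0}^{k-1}(A + iα·I) T^k/k!` (the formal
series `(1-αT)^{-A/α}`), one has `G(X₁) · G((X₂-X₁)(1-αX₁)^{-1}) = G(X₂)` in
`M_l(K[[X₁,X₂]])`.  The substituted argument `Y = (X₂-X₁)(1-αX₁)^{-1}` is
characterized by `Y·(1-αX₁) = X₂ - X₁` (it automatically has zero constant
term). -/
theorem statement4 (α : K) (A : Matrix (Fin l) (Fin l) K)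
    (Y : MvPowerSeries (Fin 2) (Matrix (Fin l) (Fin l) K))
    (hY0 : MvPowerSeries.coeff (0 : Fin 2 →₀ ℕ) Y = 0)
    (hY : Y * (1 - MvPowerSeries.C (σ := Fin 2) (α • (1 : Matrix (Fin l) (Fin l) K)) *
            MvPowerSeries.X 0)
          = MvPowerSeries.X 1 - MvPowerSeries.X 0) :
    Gsubst A α (MvPowerSeries.X 0) * Gsubst A α Y = Gsubst A α (MvPowerSeries.X 1) :=
  statement4_general α A Y hY
end

section
/- Let O be a complete discrete valuation ring with uniformizer π and residue characteristic p > 0, let α ∈ O and A ∈ M_l(O). If the sequence P_n = ∏_{i=0}^{n} (A + iα·I) converges to 0 in the π-adic topology on M_l(O), then the image of ∏_{i=0}^{p-1}(A + iα·I) in M_l(O/π) is nilpotent. -/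
open Finset Polynomial

/-!
Modulo `π` we have `p = 0`, so the factors `X + iα` of `P_n` depend only on `i mod p`. Hence the
image of `P_{mp-1}` in `M_l(O/π)` is the `m`-th power of the image of `P_{p-1}`; since `P_n` lies
in `π M_l(O)` for all large `n`, that power vanishes for large `m`.
-/

theorem RingHom.mapMatrix_aeval {R S n : Type*} [CommSemiring R] [CommSemiring S] [Fintype n]
    [DecidableEq n] (f : R →+* S) (A : Matrix n n R) (q : R[X]) :
    f.mapMatrix (aeval A q) = aeval (A.map f) (q.map f) :=
  map_aeval_eq_aeval_map (by ext r i j; simp [Matrix.algebraMap_matrix_apply, apply_ite f]) q A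

theorem Finset.prod_range_mul_eq_pow_of_periodic {M : Type*} [CommMonoid M] {f : ℕ → M} {p : ℕ}
    (hf : Function.Periodic f p) (m : ℕ) :
    ∏ i ∈ range (m * p), f i = (∏ i ∈ range p, f i) ^ m := by
  induction m with
  | zero => simp
  | succ m ih =>
    rw [Nat.succ_mul, prod_range_add, ih, pow_succ]
    congr 1
    refine prod_congr rfl fun i _ => ?_
    rw [add_comm]
    exact (hf.nat_mul m) i

theorem Polynomial.periodic_X_add_C_natCast_mul {R : Type*} [CommRing R] {p : ℕ}
    (hp : (p : R) = 0) (a : R) : Function.Periodic (fun i : ℕ => X + C ((i : R) * a)) p := by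
  intro i
  simp [hp]

theorem Ideal.Quotient.mk_span_singleton_mapMatrix_smul {R n : Type*} [CommRing R] [Fintype n]
    [DecidableEq n] (π : R) (B : Matrix n n R) :
    (Ideal.Quotient.mk (Ideal.span {π})).mapMatrix (π • B) = 0 := by
  ext i j
  simp

theorem statement11_general {O : Type*} [CommRing O]
    (π : O)
    (p : ℕ) (hp : p.Prime) (hpπ : π ∣ (p : O))
    (α : O) {l : ℕ} (A : Matrix (Fin l) (Fin l) O)
    (hconv : ∀ k : ℕ, ∃ N : ℕ, ∀ n ≥ N, ∃ B : Matrix (Fin l) (Fin l) O,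
      Polynomial.aeval A (∏ i ∈ Finset.range (n + 1),
        (Polynomial.X + Polynomial.C ((i : O) * α))) = (π ^ k) • B) :
    IsNilpotent
      ((Ideal.Quotient.mk (Ideal.span {π})).mapMatrix
        (Polynomial.aeval A (∏ i ∈ Finset.range p,
          (Polynomial.X + Polynomial.C ((i : O) * α))))) := by
  set f := Ideal.Quotient.mk (Ideal.span {π})
  have hp_zero : (p : O ⧸ Ideal.span {π}) = 0 := by
    rw [← map_natCast f, Ideal.Quotient.eq_zero_iff_mem, Ideal.mem_span_singleton]
    exact hpπ
  have hpow (m : ℕ) : f.mapMatrix (aeval A (∏ i ∈ range (m * p), (X + C ((i : O) * α)))) =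
      f.mapMatrix (aeval A (∏ i ∈ range p, (X + C ((i : O) * α)))) ^ m := by
    rw [f.mapMatrix_aeval, f.mapMatrix_aeval, ← map_pow, Polynomial.map_prod, Polynomial.map_prod,
      prod_range_mul_eq_pow_of_periodic]
    convert periodic_X_add_C_natCast_mul hp_zero (f α) using 2
    simp
  obtain ⟨N, hN⟩ := hconv 1
  have hNp : N ≤ (N + 1) * p - 1 := by
    have := Nat.le_mul_of_pos_right (N + 1) hp.pos
    omega
  obtain ⟨B, hB⟩ := hN _ hNp
  refine ⟨N + 1, ?_⟩
  rw [← hpow, ← Nat.sub_add_cancel (Nat.mul_pos N.succ_pos hp.pos), hB, pow_one]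
  exact Ideal.Quotient.mk_span_singleton_mapMatrix_smul π B

/-- let `O` be a complete discrete valuation ring with uniformizer
`π` and residue characteristic `p > 0`, `α ∈ O`, `A ∈ M_l(O)`.  If the sequence
`P_n = ∏_{i=0}^{n}(A + iα·I)` converges to `0` π-adically (for every `k` there
is `N` with `P_n ∈ π^k·M_l(O)` for all `n ≥ N`), then the image of
`∏_{i=0}^{p-1}(A + iα·I)` in `M_l(O/π)` is nilpotent.  The products of the
pairwise commuting factors are expressed as evaluations at `A` of polynomials. -/
theorem statement11 {O : Type*} [CommRing O] [IsDomain O] [IsDiscreteValuationRing O]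
    (π : O) (hπ : Irreducible π) [IsAdicComplete (Ideal.span {π}) O]
    (p : ℕ) (hp : p.Prime) (hpπ : π ∣ (p : O))
    (α : O) {l : ℕ} (A : Matrix (Fin l) (Fin l) O)
    (hconv : ∀ k : ℕ, ∃ N : ℕ, ∀ n ≥ N, ∃ B : Matrix (Fin l) (Fin l) O,
      Polynomial.aeval A (∏ i ∈ Finset.range (n + 1),
        (Polynomial.X + Polynomial.C ((i : O) * α))) = (π ^ k) • B) :
    IsNilpotent
      ((Ideal.Quotient.mk (Ideal.span {π})).mapMatrix
        (Polynomial.aeval A (∏ i ∈ Finset.range p,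
          (Polynomial.X + Polynomial.C ((i : O) * α))))) :=
  statement11_general π p hp hpπ α A hconv
end
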